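/- Let d ≥ 2 and let a = (a_1, …, a_d) be a probability vector with a_1 ≥ a_2 ≥ … ≥ a_d > 0. For every real R with 0 ≤ R < log d, the minimum of the relative entropy D(b‖a) over all probability vectors b on {1, …, d} satisfying H(b) ≤ R equals sup_{s ≥ 1} ((1 − s)·R − ψ(s))/s, where ψ(s) = log(∑_{i=1}^d a_i^s). -/

import Mathlib

open Finset

/-- Shannon entropy of a vector on `Fin d` (natural logarithm, `0 * log 0 = 0`). -/
noncomputable def shannonEntropy {d : ℕ} (b : Fin d → ℝ) : ℝ :=
  -∑ i, b i * Real.log (b i)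

/-- Relative entropy `D(b‖a)` (natural logarithm). -/
noncomputable def relativeEntropy {d : ℕ} (b a : Fin d → ℝ) : ℝ :=
  ∑ i, b i * (Real.log (b i) - Real.log (a i))

/-- `ψ(s) = log (∑ i, a i ^ s)` (real powers, natural logarithm). -/
noncomputable def psiFn {d : ℕ} (a : Fin d → ℝ) (s : ℝ) : ℝ :=
  Real.log (∑ i, a i ^ s)

noncomputable def tiltDist {d : ℕ} (a : Fin d → ℝ) (s : ℝ) : Fin d → ℝ :=
  fun i => a i ^ s / ∑ j, a j ^ s

section basic
variable {d : ℕ} {a : Fin d → ℝ}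

lemma sumZ_pos (hd : 0 < d) (ha : ∀ i, 0 < a i) (s : ℝ) : 0 < ∑ i, a i ^ s :=
  Finset.sum_pos (fun i _ => Real.rpow_pos_of_pos (ha i) s) ⟨⟨0, hd⟩, Finset.mem_univ _⟩

lemma tilt_pos (hd : 0 < d) (ha : ∀ i, 0 < a i) (s : ℝ) (i : Fin d) :
    0 < tiltDist a s i :=
  div_pos (Real.rpow_pos_of_pos (ha i) s) (sumZ_pos hd ha s)

lemma tilt_sum (hd : 0 < d) (ha : ∀ i, 0 < a i) (s : ℝ) :
    ∑ i, tiltDist a s i = 1 := by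
  unfold tiltDist
  rw [← Finset.sum_div]
  exact div_self (ne_of_gt (sumZ_pos hd ha s))

lemma log_tilt (hd : 0 < d) (ha : ∀ i, 0 < a i) (s : ℝ) (i : Fin d) :
    Real.log (tiltDist a s i) = s * Real.log (a i) - psiFn a s := by
  unfold tiltDist psiFn
  rw [Real.log_div (ne_of_gt (Real.rpow_pos_of_pos (ha i) s)) (ne_of_gt (sumZ_pos hd ha s)),
    Real.log_rpow (ha i)]

lemma relent_eq (b : Fin d → ℝ) :
    relativeEntropy b a = -shannonEntropy b - ∑ i, b i * Real.log (a i) := by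
  unfold relativeEntropy shannonEntropy
  rw [neg_neg, ← Finset.sum_sub_distrib]
  congr 1; funext i; ring

lemma entropy_tilt (hd : 0 < d) (ha : ∀ i, 0 < a i) (s : ℝ) :
    shannonEntropy (tiltDist a s) =
      Real.log (∑ i, a i ^ s) - s * (∑ i, a i ^ s * Real.log (a i)) / (∑ i, a i ^ s) := by
  have hZ := sumZ_pos hd ha s
  unfold shannonEntropy
  have h1 : ∀ i : Fin d, tiltDist a s i * Real.log (tiltDist a s i) =
      (s / (∑ j, a j ^ s)) * (a i ^ s * Real.log (a i))
        - (Real.log (∑ j, a j ^ s) / (∑ j, a j ^ s)) * a i ^ s := by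
    intro i
    rw [log_tilt hd ha s i]
    unfold tiltDist psiFn
    ring
  rw [Finset.sum_congr rfl (fun i _ => h1 i), Finset.sum_sub_distrib,
    ← Finset.mul_sum, ← Finset.mul_sum]
  field_simp
  ring

lemma sum_tilt_log (s : ℝ) :
    ∑ i, tiltDist a s i * Real.log (a i) =
      (∑ i, a i ^ s * Real.log (a i)) / (∑ i, a i ^ s) := by
  rw [Finset.sum_div]
  apply Finset.sum_congr rfl
  intro i _; unfold tiltDist; ring

lemma relent_tilt (hd : 0 < d) (ha : ∀ i, 0 < a i) (s : ℝ) :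
    relativeEntropy (tiltDist a s) a =
      (s - 1) * (∑ i, a i ^ s * Real.log (a i)) / (∑ i, a i ^ s)
        - Real.log (∑ i, a i ^ s) := by
  rw [relent_eq, entropy_tilt hd ha s, sum_tilt_log]
  ring

lemma key_identity (hd : 0 < d) (ha : ∀ i, 0 < a i) {s : ℝ} (hs : s ≠ 0) :
    relativeEntropy (tiltDist a s) a =
      ((1 - s) * shannonEntropy (tiltDist a s) - psiFn a s) / s := by
  have hZ := sumZ_pos hd ha s
  rw [relent_tilt hd ha s, entropy_tilt hd ha s]
  unfold psiFn
  field_simp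
  ring

end basic

section duality
variable {d : ℕ} {a : Fin d → ℝ}

lemma gibbs (b q : Fin d → ℝ) (hb : ∀ i, 0 ≤ b i) (hq : ∀ i, 0 < q i)
    (hbs : ∑ i, b i = 1) (hqs : ∑ i, q i = 1) :
    0 ≤ ∑ i, b i * (Real.log (b i) - Real.log (q i)) := by
  have key : ∀ i : Fin d, b i - q i ≤ b i * (Real.log (b i) - Real.log (q i)) := by
    intro i
    rcases eq_or_lt_of_le (hb i) with h | h
    · rw [← h]; simp [(hq i).le]
    · have hlog : Real.log (q i / b i) ≤ q i / b i - 1 :=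
        Real.log_le_sub_one_of_pos (div_pos (hq i) h)
      rw [Real.log_div (ne_of_gt (hq i)) (ne_of_gt h)] at hlog
      have := mul_le_mul_of_nonneg_left hlog h.le
      have h2 : b i * (q i / b i - 1) = q i - b i := by field_simp
      nlinarith
  calc (0:ℝ) = ∑ i, (b i - q i) := by rw [Finset.sum_sub_distrib, hbs, hqs]; ring
  _ ≤ _ := Finset.sum_le_sum (fun i _ => key i)

/-- Weak duality. -/
lemma weak_duality (hd : 0 < d) (ha : ∀ i, 0 < a i) {R : ℝ}
    (b : Fin d → ℝ) (hb : ∀ i, 0 ≤ b i) (hbs : ∑ i, b i = 1)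
    (hH : shannonEntropy b ≤ R) {s : ℝ} (hs : 1 ≤ s) :
    ((1 - s) * R - psiFn a s) / s ≤ relativeEntropy b a := by
  have hs0 : (0:ℝ) < s := lt_of_lt_of_le one_pos hs
  have hg := gibbs b (tiltDist a s) hb (tilt_pos hd ha s) hbs (tilt_sum hd ha s)
  -- rewrite the Gibbs sum
  have hexp : ∑ i, b i * (Real.log (b i) - Real.log (tiltDist a s i))
      = -shannonEntropy b - s * ∑ i, b i * Real.log (a i) + psiFn a s := by
    have h1 : ∀ i : Fin d, b i * (Real.log (b i) - Real.log (tiltDist a s i))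
        = b i * Real.log (b i) - s * (b i * Real.log (a i)) + psiFn a s * b i := by
      intro i; rw [log_tilt hd ha s i]; ring
    rw [Finset.sum_congr rfl (fun i _ => h1 i)]
    rw [Finset.sum_add_distrib, Finset.sum_sub_distrib, ← Finset.mul_sum, ← Finset.mul_sum,
      hbs, mul_one]
    unfold shannonEntropy; ring
  rw [hexp] at hg
  have hlogsum : ∑ i, b i * Real.log (a i) ≤ (psiFn a s - shannonEntropy b) / s := by
    rw [le_div_iff₀ hs0]; nlinarith
  have hD : relativeEntropy b a = -shannonEntropy b - ∑ i, b i * Real.log (a i) :=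
    relent_eq b
  rw [div_le_iff₀ hs0, hD]
  nlinarith [hlogsum]

end duality

section cont
variable {d : ℕ} {a : Fin d → ℝ}
open Filter

lemma cont_rpow_base (i : Fin d) (ha : ∀ i, 0 < a i) :
    Continuous (fun s : ℝ => a i ^ s) := by
  have : (fun s : ℝ => a i ^ s) = fun s => Real.exp (Real.log (a i) * s) :=
    funext fun s => Real.rpow_def_of_pos (ha i) s
  rw [this]
  exact Real.continuous_exp.comp (continuous_const.mul continuous_id)

lemma cont_Z (ha : ∀ i, 0 < a i) : Continuous (fun s : ℝ => ∑ i, a i ^ s) :=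
  continuous_finset_sum _ (fun i _ => cont_rpow_base i ha)

lemma cont_S1 (ha : ∀ i, 0 < a i) :
    Continuous (fun s : ℝ => ∑ i, a i ^ s * Real.log (a i)) :=
  continuous_finset_sum _ (fun i _ => (cont_rpow_base i ha).mul continuous_const)

lemma cont_G (hd : 0 < d) (ha : ∀ i, 0 < a i) :
    Continuous (fun s : ℝ => shannonEntropy (tiltDist a s)) := by
  have h : Continuous (fun s : ℝ =>
      Real.log (∑ i, a i ^ s) - s * (∑ i, a i ^ s * Real.log (a i)) / (∑ i, a i ^ s)) := by
    refine Continuous.sub ((cont_Z ha).log (fun s => ne_of_gt (sumZ_pos hd ha s))) ?_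
    exact (continuous_id.mul (cont_S1 ha)).div (cont_Z ha)
      (fun s => ne_of_gt (sumZ_pos hd ha s))
  exact h.congr (fun s => (entropy_tilt hd ha s).symm)

end cont

/-- The attained case: a tilted distribution achieving equality gives the result. -/
lemma attained_case {d : ℕ} (hd : 0 < d) (a : Fin d → ℝ) (ha : ∀ i, 0 < a i) (R : ℝ)
    {s0 : ℝ} (hs0 : 1 ≤ s0) (hfeas : shannonEntropy (tiltDist a s0) ≤ R)
    (heq : relativeEntropy (tiltDist a s0) a = ((1 - s0) * R - psiFn a s0) / s0) :
    ∃ m : ℝ,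
      IsLeast {x : ℝ | ∃ b : Fin d → ℝ, (∀ i, 0 ≤ b i) ∧ (∑ i, b i = 1) ∧
        shannonEntropy b ≤ R ∧ x = relativeEntropy b a} m ∧
      IsLUB {y : ℝ | ∃ s : ℝ, 1 ≤ s ∧
        y = ((1 - s) * R - psiFn a s) / s} m := by
  refine ⟨relativeEntropy (tiltDist a s0) a,
    ⟨⟨tiltDist a s0, fun i => (tilt_pos hd ha s0 i).le, tilt_sum hd ha s0, hfeas, rfl⟩, ?_⟩,
    IsGreatest.isLUB ⟨⟨s0, hs0, heq⟩, ?_⟩⟩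
  · rintro x ⟨b, hb, hbs, hH, rfl⟩
    rw [heq]
    exact weak_duality hd ha b hb hbs hH hs0
  · rintro y ⟨s, hs, rfl⟩
    exact weak_duality hd ha _ (fun i => (tilt_pos hd ha s0 i).le) (tilt_sum hd ha s0) hfeas hs

open Filter in
lemma tendsto_mul_exp_neg {c : ℝ} (hc : c < 0) :
    Tendsto (fun s : ℝ => s * Real.exp (c * s)) atTop (nhds 0) := by
  have hlin : Tendsto (fun s : ℝ => -c * s) atTop atTop :=
    Tendsto.const_mul_atTop (by linarith) tendsto_id
  have h2 := (Real.tendsto_pow_mul_exp_neg_atTop_nhds_zero 1).comp hlin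
  have h3 := h2.const_mul (-1/c)
  rw [mul_zero] at h3
  refine h3.congr (fun s => ?_)
  simp only [Function.comp_apply, pow_one]
  have h4 : -(-c * s) = c * s := by ring
  rw [h4]
  have hc' : c ≠ 0 := ne_of_lt hc
  field_simp

lemma exists_supported_entropy {d : ℕ} (S : Finset (Fin d)) (hS : S.Nonempty)
    {R : ℝ} (hR0 : 0 ≤ R) (hRk : R ≤ Real.log S.card) :
    ∃ b : Fin d → ℝ, (∀ i, 0 ≤ b i) ∧ (∑ i, b i = 1) ∧ (∀ i, i ∉ S → b i = 0) ∧
      shannonEntropy b = R := by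
  obtain ⟨i0, hi0⟩ := hS
  set k : ℕ := S.card with hk
  have hk0 : 0 < k := Finset.card_pos.mpr ⟨i0, hi0⟩
  have hkR : (0:ℝ) < k := by exact_mod_cast hk0
  set bf : ℝ → Fin d → ℝ :=
    fun t i => if i ∈ S then (if i = i0 then 1 - t else 0) + t / k else 0 with hbf
  have hsum : ∀ t : ℝ, ∑ i, bf t i = 1 := by
    intro t
    rw [hbf]
    simp only
    rw [Finset.sum_ite_mem, Finset.univ_inter, Finset.sum_add_distrib,
      Finset.sum_ite_eq' S i0 (fun _ => 1 - t), if_pos hi0, Finset.sum_const, nsmul_eq_mul]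
    field_simp
    rw [← hk]; ring
  have hcont : Continuous (fun t => shannonEntropy (bf t)) := by
    unfold shannonEntropy
    refine (continuous_finset_sum _ ?_).neg
    intro i _
    have : (fun t => bf t i * Real.log (bf t i)) =
        (fun x => x * Real.log x) ∘ (fun t => bf t i) := rfl
    rw [this]
    refine Real.continuous_mul_log.comp ?_
    by_cases hii : i = i0
    · subst hii
      simp only [hbf, hi0, if_true, if_pos rfl]
      fun_prop
    · by_cases hiS : i ∈ S <;>
        simp only [hbf, hiS, hii, if_true, if_false] <;> fun_prop
  have hH0 : shannonEntropy (bf 0) = 0 := by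
    unfold shannonEntropy
    rw [Finset.sum_eq_zero, neg_zero]
    intro i _
    by_cases hii : i = i0
    · subst hii
      simp [hbf, hi0]
    · by_cases hiS : i ∈ S <;> simp [hbf, hiS, hii]
  have hH1 : shannonEntropy (bf 1) = Real.log k := by
    unfold shannonEntropy
    have h1 : ∀ i : Fin d, bf 1 i * Real.log (bf 1 i) =
        if i ∈ S then (1/k : ℝ) * Real.log (1/k) else 0 := by
      intro i
      by_cases hii : i = i0
      · subst hii
        simp only [hbf, hi0, if_true, if_pos rfl]
        norm_num
      · by_cases hiS : i ∈ S <;> simp [hbf, hiS, hii] <;> norm_num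
    rw [Finset.sum_congr rfl (fun i _ => h1 i), Finset.sum_ite_mem, Finset.univ_inter,
      Finset.sum_const, nsmul_eq_mul, one_div, Real.log_inv]
    field_simp
    rw [← hk]
  have hIVT := intermediate_value_Icc (zero_le_one (α := ℝ)) hcont.continuousOn
  have hRmem : R ∈ Set.Icc (shannonEntropy (bf 0)) (shannonEntropy (bf 1)) := by
    rw [hH0, hH1]; exact ⟨hR0, hRk⟩
  obtain ⟨t, ht, hHt⟩ := hIVT hRmem
  refine ⟨bf t, ?_, hsum t, ?_, hHt⟩
  · intro i
    have htk : 0 ≤ t / (k:ℝ) := div_nonneg ht.1 hkR.le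
    by_cases hii : i = i0
    · subst hii
      simp only [hbf, hi0, if_true, if_pos rfl]
      have := ht.2
      linarith
    · by_cases hiS : i ∈ S <;>
        simp only [hbf, hiS, hii, if_true, if_false] <;> linarith
  · intro i hiS
    simp [hbf, hiS]

section limits
open Filter
variable {d : ℕ} {a : Fin d → ℝ}

lemma sum_rpow_decomp (ha : ∀ i, 0 < a i) (i0 : Fin d) (s : ℝ) :
    (∑ i, a i ^ s) = a i0 ^ s * ∑ i, (a i / a i0) ^ s := by
  rw [Finset.mul_sum]
  apply Finset.sum_congr rfl
  intro i _
  rw [← Real.mul_rpow (ha i0).le (div_nonneg (ha i).le (ha i0).le)]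
  congr 1
  rw [mul_comm, div_mul_cancel₀ _ (ne_of_gt (ha i0))]

lemma sumD_pos (hd : 0 < d) (ha : ∀ i, 0 < a i) (i0 : Fin d) (s : ℝ) :
    0 < ∑ i, (a i / a i0) ^ s :=
  Finset.sum_pos (fun i _ => Real.rpow_pos_of_pos (div_pos (ha i) (ha i0)) s)
    ⟨⟨0, hd⟩, Finset.mem_univ _⟩

lemma psi_decomp (hd : 0 < d) (ha : ∀ i, 0 < a i) (i0 : Fin d) (s : ℝ) :
    psiFn a s = s * Real.log (a i0) + Real.log (∑ i, (a i / a i0) ^ s) := by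
  unfold psiFn
  rw [sum_rpow_decomp ha i0 s,
    Real.log_mul (ne_of_gt (Real.rpow_pos_of_pos (ha i0) s)) (ne_of_gt (sumD_pos hd ha i0 s)),
    Real.log_rpow (ha i0)]

lemma sumD_ge_one (ha : ∀ i, 0 < a i) (i0 : Fin d) (s : ℝ) :
    1 ≤ ∑ i, (a i / a i0) ^ s := by
  have h1 : (a i0 / a i0) ^ s = 1 := by
    rw [div_self (ne_of_gt (ha i0)), Real.one_rpow]
  calc (1:ℝ) = (a i0 / a i0) ^ s := h1.symm
  _ ≤ ∑ i, (a i / a i0) ^ s :=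
    Finset.single_le_sum
      (fun i _ => (Real.rpow_pos_of_pos (div_pos (ha i) (ha i0)) s).le) (Finset.mem_univ i0)

lemma sumD_le_d (ha : ∀ i, 0 < a i) {i0 : Fin d} (hmax : ∀ i, a i ≤ a i0)
    {s : ℝ} (hs : 0 ≤ s) :
    (∑ i, (a i / a i0) ^ s) ≤ d := by
  calc (∑ i, (a i / a i0) ^ s) ≤ ∑ _i : Fin d, (1:ℝ) := by
        apply Finset.sum_le_sum
        intro i _
        exact Real.rpow_le_one (div_nonneg (ha i).le (ha i0).le)
          ((div_le_one (ha i0)).mpr (hmax i)) hs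
  _ = d := by simp

lemma f_limit (hd : 0 < d) (ha : ∀ i, 0 < a i) {i0 : Fin d} (hmax : ∀ i, a i ≤ a i0)
    (R : ℝ) :
    Tendsto (fun s : ℝ => ((1 - s) * R - psiFn a s) / s) atTop
      (nhds (-R - Real.log (a i0))) := by
  have hA : Tendsto (fun s : ℝ => R / s) atTop (nhds 0) :=
    Tendsto.div_atTop tendsto_const_nhds tendsto_id
  have hB : Tendsto (fun s : ℝ => Real.log (∑ i, (a i / a i0) ^ s) / s) atTop (nhds 0) := by
    apply tendsto_of_tendsto_of_tendsto_of_le_of_le'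
      (tendsto_const_nhds : Tendsto (fun _ : ℝ => (0:ℝ)) atTop (nhds 0))
      (Tendsto.div_atTop
        (tendsto_const_nhds : Tendsto (fun _ : ℝ => Real.log d) atTop (nhds (Real.log d)))
        tendsto_id)
    · filter_upwards [eventually_ge_atTop (1:ℝ)] with s hs
      have h1 : (0:ℝ) ≤ Real.log (∑ i, (a i / a i0) ^ s) :=
        Real.log_nonneg (sumD_ge_one ha i0 s)
      positivity
    · filter_upwards [eventually_ge_atTop (1:ℝ)] with s hs
      apply (div_le_div_iff_of_pos_right (by linarith : (0:ℝ) < s)).mpr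
      exact Real.log_le_log (sumD_pos hd ha i0 s) (sumD_le_d ha hmax (by linarith))
  have hmain : Tendsto (fun s : ℝ =>
      R / s - R - Real.log (a i0) - Real.log (∑ i, (a i / a i0) ^ s) / s) atTop
      (nhds (0 - R - Real.log (a i0) - 0)) :=
    ((hA.sub tendsto_const_nhds).sub tendsto_const_nhds).sub hB
  have heq : (fun s : ℝ => ((1 - s) * R - psiFn a s) / s) =ᶠ[atTop]
      (fun s : ℝ => R / s - R - Real.log (a i0) - Real.log (∑ i, (a i / a i0) ^ s) / s) := by
    filter_upwards [eventually_ge_atTop (1:ℝ)] with s hs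
    have hs0 : s ≠ 0 := by linarith
    rw [psi_decomp hd ha i0 s]
    field_simp
    ring
  have := hmain.congr' heq.symm
  convert this using 2
  ring
end limits

section limits2
open Filter
variable {d : ℕ} {a : Fin d → ℝ}

lemma rpow_tendsto_ite (ha : ∀ i, 0 < a i) {i0 : Fin d} (hmax : ∀ i, a i ≤ a i0) (i : Fin d) :
    Tendsto (fun s : ℝ => (a i / a i0) ^ s) atTop
      (nhds (if a i = a i0 then (1:ℝ) else 0)) := by
  by_cases h : a i = a i0
  · rw [if_pos h]
    have : (fun s : ℝ => (a i / a i0) ^ s) = fun _ => (1:ℝ) := by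
      funext s
      rw [h, div_self (ne_of_gt (ha i0)), Real.one_rpow]
    rw [this]
    exact tendsto_const_nhds
  · rw [if_neg h]
    have hlt : a i / a i0 < 1 := (div_lt_one (ha i0)).mpr (lt_of_le_of_ne (hmax i) h)
    exact tendsto_rpow_atTop_of_base_lt_one _ (lt_trans neg_one_lt_zero (div_pos (ha i) (ha i0))) hlt

lemma D_limit (ha : ∀ i, 0 < a i) {i0 : Fin d} (hmax : ∀ i, a i ≤ a i0) :
    Tendsto (fun s : ℝ => ∑ i, (a i / a i0) ^ s) atTop
      (nhds ((Finset.univ.filter (fun i => a i = a i0)).card)) := by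
  have h := tendsto_finset_sum (f := fun i (s : ℝ) => (a i / a i0) ^ s)
    Finset.univ (fun i _ => rpow_tendsto_ite ha hmax i)
  have hval : (∑ i, if a i = a i0 then (1:ℝ) else 0)
      = ((Finset.univ.filter (fun i => a i = a i0)).card : ℝ) := by
    rw [Finset.sum_boole]
  rw [← hval]
  exact h

lemma sT_limit (ha : ∀ i, 0 < a i) {i0 : Fin d} (hmax : ∀ i, a i ≤ a i0) :
    Tendsto (fun s : ℝ => s * ∑ i, (a i / a i0) ^ s * Real.log (a i / a i0)) atTop
      (nhds 0) := by
  have h : ∀ i : Fin d, Tendsto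
      (fun s : ℝ => s * ((a i / a i0) ^ s * Real.log (a i / a i0))) atTop (nhds 0) := by
    intro i
    by_cases hi : a i = a i0
    · have : (fun s : ℝ => s * ((a i / a i0) ^ s * Real.log (a i / a i0))) = fun _ => 0 := by
        funext s
        rw [hi, div_self (ne_of_gt (ha i0)), Real.log_one]
        ring
      rw [this]; exact tendsto_const_nhds
    · have hr : 0 < a i / a i0 := div_pos (ha i) (ha i0)
      have hlt : a i / a i0 < 1 := (div_lt_one (ha i0)).mpr (lt_of_le_of_ne (hmax i) hi)
      have hc : Real.log (a i / a i0) < 0 := Real.log_neg hr hlt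
      have h2 := (tendsto_mul_exp_neg hc).const_mul (Real.log (a i / a i0))
      rw [mul_zero] at h2
      refine h2.congr (fun s => ?_)
      rw [Real.rpow_def_of_pos hr]
      ring
  have := tendsto_finset_sum (f := fun i (s : ℝ) =>
      s * ((a i / a i0) ^ s * Real.log (a i / a i0))) Finset.univ (fun i _ => h i)
  rw [Finset.sum_const, smul_zero] at this
  refine this.congr (fun s => ?_)
  rw [Finset.mul_sum]

lemma G_formula (hd : 0 < d) (ha : ∀ i, 0 < a i) (i0 : Fin d) (s : ℝ) :
    shannonEntropy (tiltDist a s) =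
      Real.log (∑ i, (a i / a i0) ^ s)
        - (s * ∑ i, (a i / a i0) ^ s * Real.log (a i / a i0)) / (∑ i, (a i / a i0) ^ s) := by
  have hZr := sum_rpow_decomp ha i0 s
  have hD := sumD_pos hd ha i0 s
  have hM : (0:ℝ) < a i0 ^ s := Real.rpow_pos_of_pos (ha i0) s
  have hS1r : (∑ i, a i ^ s * Real.log (a i)) =
      a i0 ^ s * ((∑ i, (a i / a i0) ^ s) * Real.log (a i0)
        + ∑ i, (a i / a i0) ^ s * Real.log (a i / a i0)) := by
    rw [Finset.sum_mul, ← Finset.sum_add_distrib, Finset.mul_sum]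
    apply Finset.sum_congr rfl
    intro i _
    have h1 : a i ^ s = a i0 ^ s * (a i / a i0) ^ s := by
      rw [← Real.mul_rpow (ha i0).le (div_nonneg (ha i).le (ha i0).le)]
      congr 1
      rw [mul_comm, div_mul_cancel₀ _ (ne_of_gt (ha i0))]
    rw [h1, Real.log_div (ne_of_gt (ha i)) (ne_of_gt (ha i0))]
    ring
  rw [entropy_tilt hd ha s, hZr, hS1r,
    Real.log_mul (ne_of_gt hM) (ne_of_gt hD), Real.log_rpow (ha i0)]
  field_simp
  ring

lemma G_limit (hd : 0 < d) (ha : ∀ i, 0 < a i) {i0 : Fin d} (hmax : ∀ i, a i ≤ a i0) :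
    Tendsto (fun s : ℝ => shannonEntropy (tiltDist a s)) atTop
      (nhds (Real.log ((Finset.univ.filter (fun i => a i = a i0)).card))) := by
  set k : ℕ := (Finset.univ.filter (fun i => a i = a i0)).card with hk
  have hk0 : 0 < k := by
    rw [hk]
    exact Finset.card_pos.mpr ⟨i0, Finset.mem_filter.mpr ⟨Finset.mem_univ _, rfl⟩⟩
  have hkR : (0:ℝ) < k := by exact_mod_cast hk0
  have hlog : Tendsto (fun s : ℝ => Real.log (∑ i, (a i / a i0) ^ s)) atTop
      (nhds (Real.log k)) :=
    ((Real.continuousAt_log (ne_of_gt hkR)).tendsto).comp (D_limit ha hmax)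
  have hdiv : Tendsto (fun s : ℝ =>
      (s * ∑ i, (a i / a i0) ^ s * Real.log (a i / a i0)) / (∑ i, (a i / a i0) ^ s)) atTop
      (nhds (0 / k)) :=
    (sT_limit ha hmax).div (D_limit ha hmax) (ne_of_gt hkR)
  rw [zero_div] at hdiv
  have := hlog.sub hdiv
  rw [sub_zero] at this
  exact this.congr (fun s => (G_formula hd ha i0 s).symm)

end limits2

open Filter in
set_option linter.unreachableTactic false in
set_option linter.unusedTactic false in
theorem stmt_1 {d : ℕ} (hd : 2 ≤ d) (a : Fin d → ℝ)
    (ha_pos : ∀ i, 0 < a i)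
    (ha_anti : ∀ i j : Fin d, i ≤ j → a j ≤ a i)
    (ha_sum : ∑ i, a i = 1)
    (R : ℝ) (hR0 : 0 ≤ R) (hR1 : R < Real.log d) :
    ∃ m : ℝ,
      IsLeast {x : ℝ | ∃ b : Fin d → ℝ, (∀ i, 0 ≤ b i) ∧ (∑ i, b i = 1) ∧
        shannonEntropy b ≤ R ∧ x = relativeEntropy b a} m ∧
      IsLUB {y : ℝ | ∃ s : ℝ, 1 ≤ s ∧
        y = ((1 - s) * R - psiFn a s) / s} m := by
  have hd0 : 0 < d := by omega
  by_cases hcase : ∃ s : ℝ, 1 ≤ s ∧ shannonEntropy (tiltDist a s) ≤ R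
  · obtain ⟨s1, hs1, hGs1⟩ := hcase
    rcases le_or_gt (shannonEntropy (tiltDist a 1)) R with h1 | h1
    · apply attained_case hd0 a ha_pos R le_rfl h1
      rw [key_identity hd0 ha_pos one_ne_zero]
      norm_num
    · have hcont := (cont_G hd0 ha_pos).continuousOn (s := Set.Icc 1 s1)
      obtain ⟨s0, hsmem, hGs0⟩ := intermediate_value_Icc' hs1 hcont ⟨hGs1, h1.le⟩
      apply attained_case hd0 a ha_pos R hsmem.1 (le_of_eq hGs0)
      rw [key_identity hd0 ha_pos (by nlinarith [hsmem.1] : s0 ≠ 0),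
        show shannonEntropy (tiltDist a s0) = R from hGs0]
  · push_neg at hcase
    set i0 : Fin d := ⟨0, hd0⟩ with hi0def
    have hmax : ∀ i, a i ≤ a i0 := fun i => ha_anti i0 i (by rw [Fin.le_def]; exact Nat.zero_le _)
    set S := Finset.univ.filter (fun i => a i = a i0) with hS
    have hi0S : i0 ∈ S := Finset.mem_filter.mpr ⟨Finset.mem_univ _, rfl⟩
    have hGlim := G_limit hd0 ha_pos hmax
    have hRk : R ≤ Real.log S.card := by
      apply ge_of_tendsto hGlim
      filter_upwards [eventually_ge_atTop (1:ℝ)] with s hs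
      exact (hcase s hs).le
    obtain ⟨b, hb0, hbs, hbsupp, hbH⟩ := exists_supported_entropy S ⟨i0, hi0S⟩ hR0 hRk
    have hDval : relativeEntropy b a = -R - Real.log (a i0) := by
      rw [relent_eq, hbH]
      have hterm : ∀ i : Fin d, b i * Real.log (a i) = b i * Real.log (a i0) := by
        intro i
        by_cases hiS : i ∈ S
        · rw [(Finset.mem_filter.mp hiS).2]
        · rw [hbsupp i hiS]; ring
      rw [Finset.sum_congr rfl (fun i _ => hterm i), ← Finset.sum_mul, hbs, one_mul]
    have hflim := f_limit hd0 ha_pos hmax R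
    refine ⟨-R - Real.log (a i0), ⟨⟨b, hb0, hbs, le_of_eq hbH, hDval.symm⟩, ?_⟩, ?_, ?_⟩
    · rintro x ⟨b', hb', hbs', hH', rfl⟩
      apply le_of_tendsto hflim
      filter_upwards [eventually_ge_atTop (1:ℝ)] with s hs
      exact weak_duality hd0 ha_pos b' hb' hbs' hH' hs
    · rintro y ⟨s, hs, rfl⟩
      have h := weak_duality hd0 ha_pos b hb0 hbs (le_of_eq hbH) hs
      rw [hDval] at h
      exact h
    · intro u hu
      apply le_of_tendsto hflim
      filter_upwards [eventually_ge_atTop (1:ℝ)] with s hs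
      exact hu ⟨s, hs, rfl⟩
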